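/- The following identity holds without any independence assumptions: for any values r_m, r_y of R_M, R_Y and any (x, a) with P(R_M = 1, R_Y = 1, X = x, A = a) > 0, P(R_M = r_m, R_Y = r_y | X = x, A = a) / P(R_M = 1, R_Y = 1 | X = x, A = a) = E[ P(R_M = r_m, R_Y = r_y | X, A, M, Y) / P(R_M = 1, R_Y = 1 | X, A, M, Y) | X = x, A = a, R_M = 1, R_Y = 1 ], provided P(R_M = 1, R_Y = 1 | X = x, A = a, M = m, Y = y) > 0 whenever P(X = x, A = a, M = m, Y = y) > 0. -/
import Mathlib

open scoped Classical

noncomputable def Pr {Ω : Type*} [Fintype Ω] (p : Ω → ℝ) (E : Ω → Prop) : ℝ :=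
  ∑ ω, if E ω then p ω else 0

noncomputable def cPr {Ω : Type*} [Fintype Ω] (p : Ω → ℝ) (E F : Ω → Prop) : ℝ :=
  Pr p (fun ω => E ω ∧ F ω) / Pr p F

noncomputable def odds {Ω : Type*} [Fintype Ω] (p : Ω → ℝ) (E F : Ω → Prop) : ℝ :=
  cPr p E F / cPr p (fun ω => ¬ E ω) F

lemma Pr_congr {Ω : Type*} [Fintype Ω] (p : Ω → ℝ) {E F : Ω → Prop}
    (h : ∀ ω, E ω ↔ F ω) : Pr p E = Pr p F := by
  unfold Pr; exact Finset.sum_congr rfl fun ω _ => by rw [if_congr (h ω) rfl rfl]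

lemma Pr_nonneg {Ω : Type*} [Fintype Ω] {p : Ω → ℝ} (hp : ∀ ω, 0 ≤ p ω)
    (E : Ω → Prop) : 0 ≤ Pr p E :=
  Finset.sum_nonneg fun ω _ => by split <;> simp [hp ω]

lemma Pr_mono {Ω : Type*} [Fintype Ω] {p : Ω → ℝ} (hp : ∀ ω, 0 ≤ p ω)
    {E F : Ω → Prop} (h : ∀ ω, E ω → F ω) : Pr p E ≤ Pr p F := by
  apply Finset.sum_le_sum; intro ω _
  by_cases hE : E ω
  · rw [if_pos hE, if_pos (h ω hE)]
  · rw [if_neg hE]; split <;> simp [hp ω]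

lemma Pr_zero_of_subset {Ω : Type*} [Fintype Ω] {p : Ω → ℝ} (hp : ∀ ω, 0 ≤ p ω)
    {E F : Ω → Prop} (h : ∀ ω, E ω → F ω) (hF : Pr p F = 0) : Pr p E = 0 :=
  le_antisymm (hF ▸ Pr_mono hp h) (Pr_nonneg hp E)

lemma Pr_fiber {Ω ℳ 𝒴 : Type*} [Fintype Ω] [Fintype ℳ] [Fintype 𝒴]
    (p : Ω → ℝ) (M : Ω → ℳ) (Y : Ω → 𝒴) (Q : Ω → Prop) :
    Pr p Q = ∑ m : ℳ, ∑ y : 𝒴, Pr p (fun ω => Q ω ∧ M ω = m ∧ Y ω = y) := by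
  unfold Pr
  have key : ∀ ω : Ω, (if Q ω then p ω else 0)
      = ∑ m : ℳ, ∑ y : 𝒴, if Q ω ∧ M ω = m ∧ Y ω = y then p ω else 0 := by
    intro ω
    by_cases hQ : Q ω
    · simp [hQ, ite_and, Finset.sum_ite_eq]
    · simp [hQ]
  rw [Finset.sum_congr rfl fun ω _ => key ω, Finset.sum_comm]
  exact Finset.sum_congr rfl fun m _ => by rw [Finset.sum_comm]; exact Finset.sum_congr rfl fun y _ => Finset.sum_congr rfl fun ω _ => by congr

/-- General identity (eq. ini1): the ratio of joint missingness-pattern probabilities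
given `(X, A)` equals the conditional expectation, over complete cases, of the
corresponding ratio given `(X, A, M, Y)`. No independence assumptions are needed. -/
theorem ini1_identity
    {Ω 𝒳 𝒜 ℳ 𝒴 : Type*} [Fintype Ω] [Fintype ℳ] [Fintype 𝒴]
    (p : Ω → ℝ) (hp : ∀ ω, 0 ≤ p ω) (hsum : ∑ ω, p ω = 1)
    (X : Ω → 𝒳) (A : Ω → 𝒜) (M : Ω → ℳ) (Y : Ω → 𝒴) (RM RY : Ω → ℕ)
    (hRM : ∀ ω, RM ω = 0 ∨ RM ω = 1) (hRY : ∀ ω, RY ω = 0 ∨ RY ω = 1) :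
    ∀ (rm ry : ℕ) (x : 𝒳) (a : 𝒜),
      0 < Pr p (fun ω => RM ω = 1 ∧ RY ω = 1 ∧ X ω = x ∧ A ω = a) →
      (∀ (m : ℳ) (y : 𝒴), 0 < Pr p (fun ω => X ω = x ∧ A ω = a ∧ M ω = m ∧ Y ω = y) →
        0 < cPr p (fun ω => RM ω = 1 ∧ RY ω = 1)
              (fun ω => X ω = x ∧ A ω = a ∧ M ω = m ∧ Y ω = y)) →
      cPr p (fun ω => RM ω = rm ∧ RY ω = ry) (fun ω => X ω = x ∧ A ω = a)
          / cPr p (fun ω => RM ω = 1 ∧ RY ω = 1) (fun ω => X ω = x ∧ A ω = a)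
        = ∑ m : ℳ, ∑ y : 𝒴,
            (cPr p (fun ω => RM ω = rm ∧ RY ω = ry)
                (fun ω => X ω = x ∧ A ω = a ∧ M ω = m ∧ Y ω = y)
              / cPr p (fun ω => RM ω = 1 ∧ RY ω = 1)
                  (fun ω => X ω = x ∧ A ω = a ∧ M ω = m ∧ Y ω = y))
            * cPr p (fun ω => M ω = m ∧ Y ω = y)
                (fun ω => X ω = x ∧ A ω = a ∧ RM ω = 1 ∧ RY ω = 1) := by
  intro rm ry x a h0 hpos
  -- key probabilities
  set P11 := Pr p (fun ω => (RM ω = 1 ∧ RY ω = 1) ∧ (X ω = x ∧ A ω = a)) with hP11def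
  have hP11 : 0 < P11 := by
    rw [hP11def]
    rw [Pr_congr p (F := fun ω => RM ω = 1 ∧ RY ω = 1 ∧ X ω = x ∧ A ω = a) (by tauto)]
    exact h0
  have hPxa : 0 < Pr p (fun ω => X ω = x ∧ A ω = a) :=
    lt_of_lt_of_le hP11 (Pr_mono hp (fun ω h => h.2))
  -- numerator over fibers
  have hfib : Pr p (fun ω => (RM ω = rm ∧ RY ω = ry) ∧ (X ω = x ∧ A ω = a))
      = ∑ m : ℳ, ∑ y : 𝒴,
          Pr p (fun ω => (RM ω = rm ∧ RY ω = ry) ∧ (X ω = x ∧ A ω = a ∧ M ω = m ∧ Y ω = y)) := by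
    rw [Pr_fiber p M Y]
    exact Finset.sum_congr rfl fun m _ => Finset.sum_congr rfl fun y _ =>
      Pr_congr p (by tauto)
  -- LHS simplification
  have hLHS : cPr p (fun ω => RM ω = rm ∧ RY ω = ry) (fun ω => X ω = x ∧ A ω = a)
      / cPr p (fun ω => RM ω = 1 ∧ RY ω = 1) (fun ω => X ω = x ∧ A ω = a)
      = Pr p (fun ω => (RM ω = rm ∧ RY ω = ry) ∧ (X ω = x ∧ A ω = a)) / P11 := by
    unfold cPr
    rw [← hP11def]
    field_simp
  rw [hLHS, hfib, Finset.sum_div]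
  apply Finset.sum_congr rfl; intro m _
  rw [Finset.sum_div]
  apply Finset.sum_congr rfl; intro y _
  -- per-fiber
  set Pxamy := Pr p (fun ω => X ω = x ∧ A ω = a ∧ M ω = m ∧ Y ω = y) with hPxamy
  set P11my := Pr p (fun ω => (RM ω = 1 ∧ RY ω = 1) ∧ (X ω = x ∧ A ω = a ∧ M ω = m ∧ Y ω = y)) with hP11my
  set Prmy := Pr p (fun ω => (RM ω = rm ∧ RY ω = ry) ∧ (X ω = x ∧ A ω = a ∧ M ω = m ∧ Y ω = y)) with hPrmy
  have hwt : Pr p (fun ω => (M ω = m ∧ Y ω = y) ∧ (X ω = x ∧ A ω = a ∧ RM ω = 1 ∧ RY ω = 1))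
      = P11my := Pr_congr p (by tauto)
  have hden : Pr p (fun ω => X ω = x ∧ A ω = a ∧ RM ω = 1 ∧ RY ω = 1) = P11 :=
    Pr_congr p (by tauto)
  unfold cPr
  rw [hwt, hden, ← hPxamy, ← hP11my, ← hPrmy]
  by_cases hz : Pxamy = 0
  · have h1 : Prmy = 0 := Pr_zero_of_subset hp (fun ω h => h.2) hz
    have h2 : P11my = 0 := Pr_zero_of_subset hp (fun ω h => h.2) hz
    simp [h1, h2]
  · have hx : 0 < Pxamy := lt_of_le_of_ne (Pr_nonneg hp _) (Ne.symm hz)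
    have h11 : 0 < P11my := by
      have := hpos m y hx
      unfold cPr at this
      rw [← hPxamy, ← hP11my] at this
      have h2 := mul_pos this hx
      rwa [div_mul_cancel₀ _ hz] at h2
    field_simp
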